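/- Let X be a separable normed space over ℝ and Φ : X → ℝⁿ a continuous linear surjective operator. Let {x_i}_{i∈ℕ} be a dense sequence in X. Then there exist indices i₁, ..., i_n such that the vectors x_{i₁}, ..., x_{i_n} are linearly independent and the restriction of Φ to W = span{x_{i₁}, ..., x_{i_n}} is a linear isomorphism from W onto ℝⁿ. -/

import Mathlib

/-!
Since Φ is continuous and surjective, `Φ ∘ x` has dense range in `ℝⁿ`; a dense subset of a
finite-dimensional space spans it, so some `n` of the vectors `Φ (x i)` form a basis. A family whose
image under a linear map is a basis is linearly independent, and the map sends its span
bijectively onto the target.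
-/

open Set Submodule

theorem Submodule.span_range_eq_top_of_denseRange {𝕜 E ι : Type*} [NontriviallyNormedField 𝕜]
    [CompleteSpace 𝕜] [AddCommGroup E] [TopologicalSpace E] [IsTopologicalAddGroup E]
    [Module 𝕜 E] [ContinuousSMul 𝕜 E] [T2Space E] [FiniteDimensional 𝕜 E] {v : ι → E}
    (hv : DenseRange v) : span 𝕜 (range v) = ⊤ := by
  have hdense : Dense (span 𝕜 (range v) : Set E) := hv.mono subset_span
  simpa only [(span 𝕜 (range v)).closed_of_finiteDimensional.closure_eq, coe_eq_univ]
    using hdense.closure_eq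

theorem Module.Basis.exists_linearIndependent_comp_span_eq_top {K V ι κ : Type*}
    [DivisionRing K] [AddCommGroup V] [Module K V] (b : Module.Basis κ K V) {v : ι → V}
    (hv : span K (range v) = ⊤) :
    ∃ idx : κ → ι, LinearIndependent K (v ∘ idx) ∧ span K (range (v ∘ idx)) = ⊤ := by
  let c := Module.Basis.ofSpan hv.ge
  let e := c.indexEquiv b
  have hc : ∀ k, ∃ i, v i = c (e.symm k) := fun k => ofSpan_subset hv.ge (mem_range_self _)
  choose idx hidx using hc
  have hcomp : v ∘ idx = c ∘ e.symm := funext hidx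
  refine ⟨idx, ?_, ?_⟩
  · rw [hcomp]
    exact c.linearIndependent.comp _ e.symm.injective
  · rw [hcomp, range_comp, e.symm.range_eq_univ, image_univ, c.span_eq]

theorem LinearMap.bijective_restrict_span_of_linearIndependent_comp_of_span_eq_top
    {R M N ι : Type*} [Ring R] [AddCommGroup M] [Module R M] [AddCommGroup N] [Module R N]
    (f : M →ₗ[R] N) {v : ι → M} (hli : LinearIndependent R (f ∘ v))
    (hspan : span R (Set.range (f ∘ v)) = ⊤) :
    Function.Bijective (fun w : span R (Set.range v) => f w) := by
  have hrange : LinearMap.range (f.domRestrict (span R (Set.range v))) = ⊤ := by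
    rw [range_domRestrict, map_span, ← Set.range_comp, hspan]
  exact ⟨(f.injOn_of_disjoint_ker le_rfl (Submodule.range_ker_disjoint hli)).injective,
    LinearMap.range_eq_top.mp hrange⟩

theorem stmt2 (X : Type*) [NormedAddCommGroup X] [NormedSpace ℝ X]
    (n : ℕ) (Φ : X →L[ℝ] (Fin n → ℝ)) (hΦ : Function.Surjective Φ)
    (x : ℕ → X) (hx : DenseRange x) :
    ∃ idx : Fin n → ℕ,
      LinearIndependent ℝ (x ∘ idx) ∧
      Function.Bijective
        (fun w : ↥(Submodule.span ℝ (Set.range (x ∘ idx))) => Φ (w : X)) := by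
  have hspan : span ℝ (range (Φ ∘ x)) = ⊤ :=
    span_range_eq_top_of_denseRange (hΦ.denseRange.comp hx Φ.continuous)
  obtain ⟨idx, hli, hspan_idx⟩ :=
    (Pi.basisFun ℝ (Fin n)).exists_linearIndependent_comp_span_eq_top hspan
  let f : X →ₗ[ℝ] (Fin n → ℝ) := Φ
  exact ⟨idx, hli.of_comp f,
    f.bijective_restrict_span_of_linearIndependent_comp_of_span_eq_top hli hspan_idx⟩
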